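/- Let τ > 0 be an arbitrary constant and ε, δ ∈ (0,1). Let n be sufficiently large (depending on τ, ε, δ), let r ≤ n^{1/2−τ} with r dividing n, and set t = n/r. Let y ∈ S^{n−1} be a unit vector satisfying ‖y‖_∞ ≤ √(log(n/δ)/n). Let Π be a uniformly random permutation of {1,…,n}, write y' for the vector with coordinates y'_i = y_{Π(i)}, and for each j ∈ {1,…,r} define z_(j) = √(n/t)·( y'_{(j−1)t+1}, …, y'_{jt} ) ∈ R^t. Then Pr_Π[ there exists j ∈ {1,…,r} with | ‖z_(j)‖₂² − 1 | ≥ ε ] ≤ δ. -/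
import Mathlib


open scoped Classical

/-- The index of the `i`-th coordinate of the `j`-th consecutive block of length `t`
inside `{0, …, n−1}`, where `n = r · t`. -/
def blockIdx {r t n : ℕ} (h : r * t = n) (j : Fin r) (i : Fin t) : Fin n :=
  Fin.cast h ⟨(j : ℕ) * t + (i : ℕ), by
    have hj := j.2; have hi := i.2; nlinarith⟩

section P2Aux
variable {n : ℕ}
open Finset Equiv

-- fiber of π ↦ π a over k has constant cardinality
lemma fiber1_const (a k k' : Fin n) :
    (univ.filter (fun π : Perm (Fin n) => π a = k)).card
      = (univ.filter (fun π : Perm (Fin n) => π a = k')).card := by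
  apply Finset.card_bij' (fun π _ => Equiv.swap k k' * π) (fun π _ => Equiv.swap k k' * π)
  · intro π hπ
    simp only [mem_filter, mem_univ, true_and] at hπ ⊢
    simp [Equiv.Perm.mul_apply, hπ]
  · intro π hπ
    simp only [mem_filter, mem_univ, true_and] at hπ ⊢
    simp [Equiv.Perm.mul_apply, hπ, Equiv.swap_apply_right]
  · intro π _; simp [← mul_assoc]
  · intro π _; simp [← mul_assoc]

lemma fiber1_card (a k : Fin n) :
    (n : ℝ) * ((univ.filter (fun π : Perm (Fin n) => π a = k)).card : ℝ)
      = (Fintype.card (Perm (Fin n)) : ℝ) := by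
  have h := Finset.card_eq_sum_card_fiberwise
    (f := fun π : Perm (Fin n) => π a) (s := univ) (t := univ) (fun x _ => mem_univ _)
  rw [← Fintype.card, Fintype.card] at *
  rw [h]
  push_cast
  rw [Finset.sum_congr rfl (fun l _ => by exact_mod_cast congrArg Nat.cast (fiber1_const a l k))]
  simp [Finset.sum_const, Fintype.card_fin, mul_comm]

lemma sum_perm_single (a : Fin n) (f : Fin n → ℝ) :
    ∑ π : Perm (Fin n), f (π a)
      = ((Fintype.card (Perm (Fin n)) : ℝ) / n) * ∑ k, f k := by
  have hn : 0 < n := a.pos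
  have h := Finset.sum_fiberwise_of_maps_to
    (g := fun π : Perm (Fin n) => π a) (s := univ) (t := univ)
    (fun x _ => mem_univ _) (fun π : Perm (Fin n) => f (π a))
  rw [← h]
  have key : ∀ k : Fin n, ∑ π ∈ univ.filter (fun π : Perm (Fin n) => π a = k), f (π a)
      = ((univ.filter (fun π : Perm (Fin n) => π a = k)).card : ℝ) * f k := by
    intro k
    rw [Finset.sum_congr rfl (fun π hπ => by
      simp only [mem_filter] at hπ; rw [hπ.2]), Finset.sum_const, nsmul_eq_mul]
  rw [Finset.sum_congr rfl (fun k _ => key k), Finset.mul_sum]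
  refine Finset.sum_congr rfl (fun k _ => ?_)
  rw [← fiber1_card a k]
  have : (n:ℝ) ≠ 0 := Nat.cast_ne_zero.2 hn.ne'
  field_simp

lemma exists_perm_pair {k l k' l' : Fin n} (h1 : k ≠ l) (h2 : k' ≠ l') :
    ∃ σ : Perm (Fin n), σ k = k' ∧ σ l = l' := by
  refine ⟨(Equiv.swap (Equiv.swap k k' l) l') * Equiv.swap k k', ?_, ?_⟩
  · have hne : Equiv.swap k k' l ≠ k' := by
      intro hc
      exact h1 (Equiv.swap k k' |>.injective (by rw [hc, Equiv.swap_apply_left]))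
    simp only [Equiv.Perm.mul_apply, Equiv.swap_apply_left]
    rw [Equiv.swap_apply_of_ne_of_ne (Ne.symm hne) h2]
  · simp [Equiv.Perm.mul_apply]

lemma fiber2_const (a b : Fin n) {p q : Fin n × Fin n}
    (hp : p ∈ Finset.univ.offDiag) (hq : q ∈ Finset.univ.offDiag) :
    (univ.filter (fun π : Perm (Fin n) => (π a, π b) = p)).card
      = (univ.filter (fun π : Perm (Fin n) => (π a, π b) = q)).card := by
  rw [Finset.mem_offDiag] at hp hq
  obtain ⟨σ, hσ1, hσ2⟩ := exists_perm_pair hp.2.2 hq.2.2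
  apply Finset.card_bij' (fun π _ => σ * π) (fun π _ => σ⁻¹ * π)
  · intro π hπ
    simp only [mem_filter, mem_univ, true_and, Prod.mk.injEq] at hπ ⊢
    obtain ⟨h1, h2⟩ := Prod.mk.injEq .. ▸ hπ
    simp [Prod.ext_iff, Equiv.Perm.mul_apply, h1, h2, hσ1, hσ2]
  · intro π hπ
    simp only [mem_filter, mem_univ, true_and, Prod.mk.injEq] at hπ ⊢
    obtain ⟨h1, h2⟩ := Prod.mk.injEq .. ▸ hπ
    simp [Prod.ext_iff, Equiv.Perm.mul_apply, h1, h2, ← hσ1, ← hσ2]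
  · intro π _; simp [← mul_assoc]
  · intro π _; simp [← mul_assoc]

lemma fiber2_card {a b : Fin n} (hab : a ≠ b) {p : Fin n × Fin n}
    (hp : p ∈ Finset.univ.offDiag) :
    ((n : ℝ) * (n - 1)) * ((univ.filter (fun π : Perm (Fin n) => (π a, π b) = p)).card : ℝ)
      = (Fintype.card (Perm (Fin n)) : ℝ) := by
  have hmaps : ∀ π : Perm (Fin n), π ∈ univ → (π a, π b) ∈ (univ : Finset (Fin n)).offDiag := by
    intro π _
    exact Finset.mem_offDiag.2 ⟨mem_univ _, mem_univ _, fun hc => hab (π.injective hc)⟩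
  have h := Finset.card_eq_sum_card_fiberwise hmaps
  rw [← Fintype.card] at h
  have hconst : ∀ q ∈ (univ : Finset (Fin n)).offDiag,
      (univ.filter (fun π : Perm (Fin n) => (π a, π b) = q)).card
        = (univ.filter (fun π : Perm (Fin n) => (π a, π b) = p)).card :=
    fun q hq => fiber2_const a b hq hp
  rw [Finset.sum_congr rfl hconst, Finset.sum_const, Finset.offDiag_card] at h
  have hn2 : 2 ≤ n := by
    rcases Finset.mem_offDiag.1 hp with ⟨_, _, hne⟩
    by_contra hc
    push_neg at hc
    interval_cases n
    · exact absurd p.1.2 (by simp)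
    · exact hne (Subsingleton.elim _ _)
  have heq : ((Finset.univ : Finset (Fin n)).card * (Finset.univ : Finset (Fin n)).card
      - (Finset.univ : Finset (Fin n)).card : ℕ) = n * (n-1) := by
    simp only [Finset.card_univ, Fintype.card_fin, Nat.mul_sub, Nat.mul_one]
  rw [heq] at h
  rw [h, smul_eq_mul]
  push_cast [Nat.cast_sub (show 1 ≤ n by omega)]
  ring

lemma sum_perm_pair {a b : Fin n} (hab : a ≠ b) (F : Fin n × Fin n → ℝ) :
    ∑ π : Perm (Fin n), F (π a, π b)
      = ((Fintype.card (Perm (Fin n)) : ℝ) / ((n : ℝ) * (n - 1)))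
        * ∑ p ∈ (univ : Finset (Fin n)).offDiag, F p := by
  have hn2 : 2 ≤ n := by
    by_contra hc
    push_neg at hc
    have := a.pos
    interval_cases n
    exact hab (Subsingleton.elim a b)
  have hmaps : ∀ π : Perm (Fin n), π ∈ univ → (π a, π b) ∈ (univ : Finset (Fin n)).offDiag := by
    intro π _
    exact Finset.mem_offDiag.2 ⟨mem_univ _, mem_univ _, fun hc => hab (π.injective hc)⟩
  have h := Finset.sum_fiberwise_of_maps_to
    (g := fun π : Perm (Fin n) => (π a, π b)) (s := univ) (t := (univ : Finset (Fin n)).offDiag)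
    hmaps (fun π : Perm (Fin n) => F (π a, π b))
  rw [← h]
  have key : ∀ p ∈ (univ : Finset (Fin n)).offDiag,
      ∑ π ∈ univ.filter (fun π : Perm (Fin n) => (π a, π b) = p), F (π a, π b)
      = ((univ.filter (fun π : Perm (Fin n) => (π a, π b) = p)).card : ℝ) * F p := by
    intro p _
    rw [Finset.sum_congr rfl (fun π hπ => by
      simp only [mem_filter] at hπ; rw [hπ.2]), Finset.sum_const, nsmul_eq_mul]
  rw [Finset.sum_congr rfl key, Finset.mul_sum]
  refine Finset.sum_congr rfl (fun p hp => ?_)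
  rw [← fiber2_card hab hp]
  have h1 : (n : ℝ) ≠ 0 := Nat.cast_ne_zero.2 (by omega)
  have h2 : (n : ℝ) - 1 ≠ 0 := by
    have : (1:ℝ) ≤ (n:ℝ) - 1 := by
      have : (2:ℝ) ≤ n := by exact_mod_cast hn2
      linarith
    linarith
  field_simp

lemma split_diag (F : Fin n × Fin n → ℝ) :
    ∑ i : Fin n, ∑ j : Fin n, F (i, j)
      = (∑ i : Fin n, F (i, i)) + ∑ p ∈ (univ : Finset (Fin n)).offDiag, F p := by
  rw [← Finset.sum_product']
  rw [← Finset.diag_union_offDiag (univ : Finset (Fin n)),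
    Finset.sum_union (Finset.disjoint_diag_offDiag _)]
  congr 1
  rw [Finset.sum_diag]

lemma sum_ite_diag {t : ℕ} (A B : ℝ) :
    ∑ i : Fin t, ∑ i' : Fin t, (if i = i' then A else B)
      = (t : ℝ) * A + (t : ℝ) * ((t : ℝ) - 1) * B := by
  have inner : ∀ i : Fin t, ∑ i' : Fin t, (if i = i' then A else B)
      = (A - B) + (t : ℝ) * B := by
    intro i
    have : ∀ i' : Fin t, (if i = i' then A else B) = (if i = i' then A - B else 0) + B := by
      intro i'; by_cases h : i = i' <;> simp [h]
    rw [Finset.sum_congr rfl (fun i' _ => this i'), Finset.sum_add_distrib,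
      Finset.sum_ite_eq, if_pos (mem_univ i), Finset.sum_const, Finset.card_univ,
      Fintype.card_fin, nsmul_eq_mul]
  rw [Finset.sum_congr rfl (fun i _ => inner i), Finset.sum_const, Finset.card_univ,
    Fintype.card_fin, nsmul_eq_mul]
  ring

lemma variance_bound {t : ℕ} (w : Fin n → ℝ) (hw0 : ∀ k, 0 ≤ w k) (hsum : ∑ k, w k = 1)
    {M : ℝ} (hwM : ∀ k, w k ≤ M) (p : Fin t → Fin n) (hp : Function.Injective p)
    (hn2 : 2 ≤ n) (htn : t ≤ n) :
    ∑ π : Perm (Fin n), ((∑ i, w (π (p i))) - t / n) ^ 2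
      ≤ (Fintype.card (Perm (Fin n)) : ℝ) * ((t : ℝ) / n) * M := by
  set c : ℝ := (Fintype.card (Perm (Fin n)) : ℝ) with hc
  set Q : ℝ := ∑ k, w k ^ 2 with hQ
  have hcpos : (0:ℝ) ≤ c := Nat.cast_nonneg _
  have hnR : (2:ℝ) ≤ (n:ℝ) := by exact_mod_cast hn2
  have htR : (t:ℝ) ≤ (n:ℝ) := by exact_mod_cast htn
  have ht0 : (0:ℝ) ≤ (t:ℝ) := Nat.cast_nonneg _
  have hn0 : (n:ℝ) ≠ 0 := by linarith
  have hn1 : (n:ℝ) - 1 ≠ 0 := by linarith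
  -- basic facts about Q and M
  have hQ0 : 0 ≤ Q := Finset.sum_nonneg (fun k _ => sq_nonneg _)
  have hw1 : ∀ k, w k ≤ 1 := by
    intro k
    calc w k ≤ ∑ k', w k' := Finset.single_le_sum (fun k' _ => hw0 k') (mem_univ k)
    _ = 1 := hsum
  have hQ1 : Q ≤ 1 := by
    calc Q ≤ ∑ k, w k := Finset.sum_le_sum (fun k _ => by
            nlinarith [hw0 k, hw1 k])
    _ = 1 := hsum
  have hQM : Q ≤ M := by
    calc Q ≤ ∑ k, M * w k := Finset.sum_le_sum (fun k _ => by
            rw [sq]; exact mul_le_mul_of_nonneg_right (hwM k) (hw0 k))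
    _ = M := by rw [← Finset.mul_sum, hsum, mul_one]
  -- first moment
  have E1 : ∑ π : Perm (Fin n), (∑ i, w (π (p i))) = c * ((t:ℝ) / n) := by
    rw [Finset.sum_comm]
    rw [Finset.sum_congr rfl (fun i _ => sum_perm_single (p i) w)]
    rw [hsum, Finset.sum_const, Finset.card_univ, Fintype.card_fin, nsmul_eq_mul]
    ring
  -- off-diagonal sum of products
  have offdiag_val : ∑ q ∈ (univ : Finset (Fin n)).offDiag, w q.1 * w q.2 = 1 - Q := by
    have h1 := split_diag (fun q : Fin n × Fin n => w q.1 * w q.2)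
    simp only at h1
    have h2 : ∑ i : Fin n, ∑ j : Fin n, w i * w j = 1 := by
      rw [← Finset.sum_mul_sum, hsum, one_mul]
    have h3 : ∑ i : Fin n, w i * w i = Q := by
      rw [hQ]; exact Finset.sum_congr rfl (fun k _ => (sq (w k)).symm)
    linarith [h1, h2, h3]
  -- second moment
  have E2 : ∑ π : Perm (Fin n), (∑ i, w (π (p i))) ^ 2
      = (t:ℝ) * (c / n * Q)
        + (t:ℝ) * ((t:ℝ) - 1) * (c / ((n:ℝ) * ((n:ℝ) - 1)) * (1 - Q)) := by
    have expand : ∀ π : Perm (Fin n), (∑ i, w (π (p i))) ^ 2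
        = ∑ i : Fin t, ∑ i' : Fin t, w (π (p i)) * w (π (p i')) := by
      intro π; rw [sq, Finset.sum_mul_sum]
    rw [Finset.sum_congr rfl (fun π _ => expand π), Finset.sum_comm]
    have swap2 : ∀ i : Fin t, ∑ π : Perm (Fin n), ∑ i' : Fin t, w (π (p i)) * w (π (p i'))
        = ∑ i' : Fin t, ∑ π : Perm (Fin n), w (π (p i)) * w (π (p i')) :=
      fun i => Finset.sum_comm
    rw [Finset.sum_congr rfl (fun i _ => swap2 i)]
    have inner : ∀ i i' : Fin t, ∑ π : Perm (Fin n), w (π (p i)) * w (π (p i'))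
        = if i = i' then c / n * Q
          else c / ((n:ℝ) * ((n:ℝ) - 1)) * (1 - Q) := by
      intro i i'
      by_cases hii : i = i'
      · subst hii
        simp only [if_pos]
        have hsq : ∀ π : Perm (Fin n), w (π (p i)) * w (π (p i)) = (fun k => w k ^ 2) (π (p i)) := by
          intro π; simp [sq]
        rw [Finset.sum_congr rfl (fun π _ => hsq π), sum_perm_single (p i) (fun k => w k ^ 2)]
      · simp only [if_neg hii]
        have hne : p i ≠ p i' := fun hc' => hii (hp hc')
        rw [sum_perm_pair hne (fun q => w q.1 * w q.2), offdiag_val]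
    rw [Finset.sum_congr rfl (fun i _ => Finset.sum_congr rfl (fun i' _ => inner i i'))]
    exact sum_ite_diag _ _
  -- expand the variance
  have expandVar : ∑ π : Perm (Fin n), ((∑ i, w (π (p i))) - (t:ℝ) / n) ^ 2
      = (∑ π : Perm (Fin n), (∑ i, w (π (p i))) ^ 2)
        - 2 * ((t:ℝ)/n) * (∑ π : Perm (Fin n), (∑ i, w (π (p i))))
        + c * ((t:ℝ)/n)^2 := by
    have : ∀ π : Perm (Fin n), ((∑ i, w (π (p i))) - (t:ℝ) / n) ^ 2
        = (∑ i, w (π (p i))) ^ 2 - 2 * ((t:ℝ)/n) * (∑ i, w (π (p i))) + ((t:ℝ)/n)^2 := by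
      intro π; ring
    rw [Finset.sum_congr rfl (fun π _ => this π), Finset.sum_add_distrib,
      Finset.sum_sub_distrib, ← Finset.mul_sum, Finset.sum_const, Finset.card_univ,
      nsmul_eq_mul, hc]
  rw [expandVar, E1, E2]
  -- now pure algebra/inequalities
  have key1 : (t:ℝ) * ((t:ℝ) - 1) / ((n:ℝ) * ((n:ℝ) - 1)) ≤ ((t:ℝ)/n)^2 := by
    rw [div_le_iff₀ (by nlinarith), div_pow, div_mul_eq_mul_div, le_div_iff₀ (by positivity)]
    nlinarith [mul_le_mul_of_nonneg_right htR (mul_nonneg ht0 (by linarith : (0:ℝ) ≤ (n:ℝ)))]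
  have hQ1' : 0 ≤ 1 - Q := by linarith
  have step : (t:ℝ) * (c / n * Q)
        + (t:ℝ) * ((t:ℝ) - 1) * (c / ((n:ℝ) * ((n:ℝ) - 1)) * (1 - Q))
        - 2 * ((t:ℝ)/n) * (c * ((t:ℝ)/n)) + c * ((t:ℝ)/n)^2
      ≤ c * ((t:ℝ)/n) * Q := by
    have h2 : (t:ℝ) * ((t:ℝ) - 1) * (c / ((n:ℝ) * ((n:ℝ) - 1)) * (1 - Q))
        ≤ c * ((t:ℝ)/n)^2 * (1 - Q) := by
      have := mul_le_mul_of_nonneg_right key1 (mul_nonneg hcpos hQ1')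
      calc (t:ℝ) * ((t:ℝ) - 1) * (c / ((n:ℝ) * ((n:ℝ) - 1)) * (1 - Q))
          = ((t:ℝ) * ((t:ℝ) - 1) / ((n:ℝ) * ((n:ℝ) - 1))) * (c * (1 - Q)) := by ring
        _ ≤ ((t:ℝ)/n)^2 * (c * (1 - Q)) := this
        _ = c * ((t:ℝ)/n)^2 * (1 - Q) := by ring
    have h3 : (t:ℝ) * (c / n * Q) = c * ((t:ℝ)/n) * Q := by ring
    -- goal follows since c*(t/n)^2*(1-Q) - 2*c*(t/n)^2 + c*(t/n)^2 = -c*(t/n)^2*Q ≤ 0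
    nlinarith [mul_nonneg (mul_nonneg hcpos (sq_nonneg ((t:ℝ)/n))) hQ0]
  calc (t:ℝ) * (c / n * Q)
        + (t:ℝ) * ((t:ℝ) - 1) * (c / ((n:ℝ) * ((n:ℝ) - 1)) * (1 - Q))
        - 2 * ((t:ℝ)/n) * (c * ((t:ℝ)/n)) + c * ((t:ℝ)/n)^2
      ≤ c * ((t:ℝ)/n) * Q := step
    _ ≤ c * ((t:ℝ)/n) * M := by
        apply mul_le_mul_of_nonneg_left hQM
        positivity

lemma numeric_tail (a ε δ : ℝ) (n : ℕ) (r2 : ℝ) (ha0 : 0 < a) (hε : 0 < ε) (hδ : 0 < δ)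
    (hδ1 : δ < 1) (hn2 : 2 ≤ n) (hr2 : r2 ≤ (n:ℝ) ^ ((1:ℝ) - 2*a)) (hr2' : 0 ≤ r2)
    (hC : 1/(a * δ^a * ε^2 * δ) ≤ (n:ℝ)^a) :
    r2 * Real.log ((n:ℝ)/δ) ≤ δ * ε^2 * n := by
  have hnpos : (0:ℝ) < n := by exact_mod_cast Nat.lt_of_lt_of_le Nat.zero_lt_two hn2
  have hn1 : (1:ℝ) ≤ (n:ℝ) := by exact_mod_cast Nat.one_le_of_lt hn2
  have hδa : (0:ℝ) < δ^a := Real.rpow_pos_of_pos hδ a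
  have hxpos : (0:ℝ) < (n:ℝ)/δ := by positivity
  have hx1 : (1:ℝ) ≤ (n:ℝ)/δ := by
    rw [le_div_iff₀ hδ]; linarith
  have hlog0 : 0 ≤ Real.log ((n:ℝ)/δ) := Real.log_nonneg hx1
  -- log bound : log(n/δ) ≤ (1/a) * n^a / δ^a
  have hlog : Real.log ((n:ℝ)/δ) ≤ (1/a) * ((n:ℝ)^a / δ^a) := by
    have h1 : Real.log (((n:ℝ)/δ)^a) = a * Real.log ((n:ℝ)/δ) := Real.log_rpow hxpos a
    have h2 : Real.log (((n:ℝ)/δ)^a) ≤ ((n:ℝ)/δ)^a := by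
      have := Real.log_le_sub_one_of_pos (Real.rpow_pos_of_pos hxpos a)
      linarith
    have h3 : ((n:ℝ)/δ)^a = (n:ℝ)^a / δ^a :=
      Real.div_rpow (by positivity) hδ.le a
    rw [h1, h3] at h2
    rw [div_mul_eq_mul_div, le_div_iff₀ ha0, mul_comm]
    linarith [h2]
  have hna : (0:ℝ) ≤ (n:ℝ)^a := (Real.rpow_pos_of_pos hnpos a).le
  have h12a : (0:ℝ) ≤ (n:ℝ)^((1:ℝ) - 2*a) := (Real.rpow_pos_of_pos hnpos _).le
  have chain : r2 * Real.log ((n:ℝ)/δ)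
      ≤ (n:ℝ)^((1:ℝ) - 2*a) * ((1/a) * ((n:ℝ)^a / δ^a)) :=
    mul_le_mul hr2 hlog hlog0 h12a
  have combine : (n:ℝ)^((1:ℝ) - 2*a) * ((1/a) * ((n:ℝ)^a / δ^a))
      = (1/(a * δ^a)) * (n:ℝ)^((1:ℝ) - a) := by
    have : (n:ℝ)^((1:ℝ) - 2*a) * (n:ℝ)^a = (n:ℝ)^((1:ℝ) - a) := by
      rw [← Real.rpow_add hnpos]; ring_nf
    rw [← this]; field_simp
  have key : (1/(a * δ^a)) * (n:ℝ)^((1:ℝ) - a) ≤ δ * ε^2 * n := by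
    have hna' : (n:ℝ) = (n:ℝ)^((1:ℝ)-a) * (n:ℝ)^a := by
      rw [← Real.rpow_add hnpos]; ring_nf; rw [Real.rpow_one]
    have step : (1/(a * δ^a)) ≤ δ * ε^2 * (n:ℝ)^a := by
      have h := mul_le_mul_of_nonneg_left hC (by positivity : (0:ℝ) ≤ δ * ε^2)
      have heq : δ * ε^2 * (1/(a * δ^a * ε^2 * δ)) = 1/(a * δ^a) := by
        field_simp
      rw [heq] at h
      exact h
    calc (1/(a * δ^a)) * (n:ℝ)^((1:ℝ) - a)
        ≤ (δ * ε^2 * (n:ℝ)^a) * (n:ℝ)^((1:ℝ) - a) :=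
          mul_le_mul_of_nonneg_right step (Real.rpow_pos_of_pos hnpos _).le
      _ = δ * ε^2 * ((n:ℝ)^((1:ℝ)-a) * (n:ℝ)^a) := by ring
      _ = δ * ε^2 * n := by rw [← hna']
  linarith [chain, combine ▸ chain, key]

lemma blockIdx_inj {r t n : ℕ} (h : r * t = n) (j : Fin r) :
    Function.Injective (blockIdx h j) := by
  intro i i' hii
  have := congrArg Fin.val hii
  simp only [blockIdx, Fin.coe_cast] at this
  exact Fin.ext (by omega)

end P2Aux

/-- The paper's Lemma on `P₂ Π` (proved via Serfling's bound): for a unit vector `y`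
with `‖y‖_∞ ≤ √(log(n/δ)/n)`, a uniformly random permutation `Π` of `{1,…,n}` and the
`r` consecutive blocks `z₍ⱼ₎ = √(n/t)·(y'_{(j−1)t+1}, …, y'_{jt})` of the permuted vector
`y'`, the probability (over the uniform random permutation) that some block satisfies
`|‖z₍ⱼ₎‖² − 1| ≥ ε` is at most `δ`. -/
theorem p2_permutation_isometry :
    ∀ (τ ε δ : ℝ), 0 < τ → 0 < ε → ε < 1 → 0 < δ → δ < 1 →
    ∃ N : ℕ, ∀ (n r t : ℕ), N ≤ n → 0 < r →
      ∀ (h : r * t = n), t = n / r →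
      (r : ℝ) ≤ (n : ℝ) ^ ((1 : ℝ) / 2 - τ) →
      ∀ y : Fin n → ℝ, (∑ i, y i ^ 2) = 1 →
        (∀ i, |y i| ≤ Real.sqrt (Real.log ((n : ℝ) / δ) / n)) →
        ((Finset.univ.filter (fun π : Equiv.Perm (Fin n) =>
            ∃ j : Fin r,
              |((n : ℝ) / t) * (∑ i : Fin t, (y (π (blockIdx h j i))) ^ 2) - 1| ≥ ε)).card : ℝ)
          / (Fintype.card (Equiv.Perm (Fin n)) : ℝ) ≤ δ := by
  intro τ ε δ hτ hε hε1 hδ hδ1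
  set a : ℝ := min τ (1/4) with ha
  have ha0 : 0 < a := lt_min hτ (by norm_num)
  have haτ : a ≤ τ := min_le_left _ _
  set C : ℝ := 1/(a * δ^a * ε^2 * δ) with hCdef
  have hδa : (0:ℝ) < δ^a := Real.rpow_pos_of_pos hδ a
  have hC0 : 0 < C := by rw [hCdef]; positivity
  refine ⟨max 2 (⌈C ^ ((1:ℝ)/a)⌉₊ + 1), ?_⟩
  intro n r t hN hr h htdef hrbound y hy1 hy2
  have hn2 : 2 ≤ n := le_trans (le_max_left _ _) hN
  have hnpos : (0:ℝ) < n := by exact_mod_cast Nat.lt_of_lt_of_le Nat.zero_lt_two hn2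
  have hn1 : (1:ℝ) ≤ (n:ℝ) := by exact_mod_cast Nat.one_le_of_lt hn2
  have ht : 0 < t := by
    rcases Nat.eq_zero_or_pos t with h0 | h0
    · subst h0; simp at h; omega
    · exact h0
  have htn : t ≤ n := h ▸ Nat.le_mul_of_pos_left t hr
  have htpos : (0:ℝ) < t := by exact_mod_cast ht
  have hrpos : (0:ℝ) < r := by exact_mod_cast hr
  have hrt : (r:ℝ) * (t:ℝ) = (n:ℝ) := by exact_mod_cast h
  -- n^a ≥ C
  have hCn : C ≤ (n:ℝ)^a := by
    have h1 : C ^ ((1:ℝ)/a) ≤ (n:ℝ) := by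
      have : (⌈C ^ ((1:ℝ)/a)⌉₊ + 1 : ℕ) ≤ n := le_trans (le_max_right _ _) hN
      calc C ^ ((1:ℝ)/a) ≤ (⌈C ^ ((1:ℝ)/a)⌉₊ : ℝ) := Nat.le_ceil _
        _ ≤ (n : ℝ) := by exact_mod_cast le_trans (Nat.le_succ _) this
    calc C = (C ^ ((1:ℝ)/a)) ^ a := by
          rw [← Real.rpow_mul hC0.le, one_div, inv_mul_cancel₀ ha0.ne', Real.rpow_one]
      _ ≤ (n:ℝ)^a := Real.rpow_le_rpow (Real.rpow_nonneg hC0.le _) h1 ha0.le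
  -- setup
  set c : ℝ := (Fintype.card (Equiv.Perm (Fin n)) : ℝ) with hcdef
  have hcpos : (0:ℝ) < c := by
    rw [hcdef]; exact_mod_cast Fintype.card_pos
  set M : ℝ := Real.log ((n:ℝ)/δ) / n with hMdef
  have hx1 : (1:ℝ) ≤ (n:ℝ)/δ := by rw [le_div_iff₀ hδ]; linarith
  have hlog0 : 0 ≤ Real.log ((n:ℝ)/δ) := Real.log_nonneg hx1
  have hM0 : 0 ≤ M := div_nonneg hlog0 hnpos.le
  have hwM : ∀ k, y k ^ 2 ≤ M := by
    intro k
    calc y k ^ 2 = |y k| ^ 2 := (sq_abs _).symm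
      _ ≤ Real.sqrt M ^ 2 := pow_le_pow_left₀ (abs_nonneg _) (hy2 k) 2
      _ = M := Real.sq_sqrt hM0
  -- per-block bad sets and Chebyshev
  set B : Fin r → Finset (Equiv.Perm (Fin n)) := fun j =>
    Finset.univ.filter (fun π : Equiv.Perm (Fin n) =>
      ε ≤ |((n : ℝ) / t) * (∑ i : Fin t, (y (π (blockIdx h j i))) ^ 2) - 1|) with hBdef
  have cheb : ∀ j : Fin r, ((B j).card : ℝ) * (ε * (t:ℝ)/n)^2 ≤ c * ((t:ℝ)/n) * M := by
    intro j
    have hvar := variance_bound (w := fun k => y k ^ 2)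
      (fun k => sq_nonneg _) hy1 hwM (blockIdx h j) (blockIdx_inj h j) hn2 htn
    have lower : ((B j).card : ℝ) * (ε * (t:ℝ)/n)^2
        ≤ ∑ π ∈ B j, ((∑ i : Fin t, y (π (blockIdx h j i)) ^ 2) - (t:ℝ)/n)^2 := by
      rw [← nsmul_eq_mul]
      apply Finset.card_nsmul_le_sum
      intro π hπ
      rw [hBdef] at hπ
      simp only [Finset.mem_filter, Finset.mem_univ, true_and] at hπ
      set S : ℝ := ∑ i : Fin t, y (π (blockIdx h j i)) ^ 2 with hSdef
      have hid : (t:ℝ)/n * (((n:ℝ)/t)*S - 1) = S - (t:ℝ)/n := by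
        field_simp
      have habs : ε * ((t:ℝ)/n) ≤ |S - (t:ℝ)/n| := by
        rw [← hid, abs_mul, abs_of_pos (by positivity : (0:ℝ) < (t:ℝ)/n)]
        calc ε * ((t:ℝ)/n) ≤ |((n:ℝ)/t)*S - 1| * ((t:ℝ)/n) :=
              mul_le_mul_of_nonneg_right hπ (by positivity)
          _ = (t:ℝ)/n * |((n:ℝ)/t)*S - 1| := by ring
      calc (ε * (t:ℝ)/n)^2 = (ε * ((t:ℝ)/n))^2 := by ring
        _ ≤ |S - (t:ℝ)/n|^2 := pow_le_pow_left₀ (by positivity) habs 2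
        _ = (S - (t:ℝ)/n)^2 := sq_abs _
    have upper : ∑ π ∈ B j, ((∑ i : Fin t, y (π (blockIdx h j i)) ^ 2) - (t:ℝ)/n)^2
        ≤ ∑ π : Equiv.Perm (Fin n), ((∑ i : Fin t, y (π (blockIdx h j i)) ^ 2) - (t:ℝ)/n)^2 :=
      Finset.sum_le_sum_of_subset_of_nonneg (Finset.subset_univ _)
        (fun π _ _ => sq_nonneg _)
    exact le_trans lower (le_trans upper hvar)
  have hdenpos : (0:ℝ) < (ε * (t:ℝ)/n)^2 := by positivity
  have cardB : ∀ j : Fin r, ((B j).card : ℝ) ≤ c * ((t:ℝ)/n) * M / (ε * (t:ℝ)/n)^2 := by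
    intro j
    rw [le_div_iff₀ hdenpos]
    exact cheb j
  -- union bound
  have hsub : (Finset.univ.filter (fun π : Equiv.Perm (Fin n) =>
      ∃ j : Fin r,
        |((n : ℝ) / t) * (∑ i : Fin t, (y (π (blockIdx h j i))) ^ 2) - 1| ≥ ε))
      ⊆ Finset.univ.biUnion B := by
    intro π hπ
    simp only [Finset.mem_filter, Finset.mem_univ, true_and] at hπ
    obtain ⟨j, hj⟩ := hπ
    apply Finset.mem_biUnion.2 ⟨j, Finset.mem_univ _, ?_⟩
    rw [hBdef]
    simp only [Finset.mem_filter, Finset.mem_univ, true_and]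
    exact hj
  have hcard : ((Finset.univ.filter (fun π : Equiv.Perm (Fin n) =>
      ∃ j : Fin r,
        |((n : ℝ) / t) * (∑ i : Fin t, (y (π (blockIdx h j i))) ^ 2) - 1| ≥ ε)).card : ℝ)
      ≤ (r:ℝ) * (c * ((t:ℝ)/n) * M / (ε * (t:ℝ)/n)^2) := by
    have h1 := Finset.card_le_card hsub
    have h2 := Finset.card_biUnion_le (s := (Finset.univ : Finset (Fin r))) (t := B)
    have h3 : ((Finset.univ.biUnion B).card : ℝ) ≤ ∑ j : Fin r, ((B j).card : ℝ) := by
      exact_mod_cast h2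
    calc ((Finset.univ.filter _).card : ℝ) ≤ ((Finset.univ.biUnion B).card : ℝ) := by
          exact_mod_cast h1
      _ ≤ ∑ j : Fin r, ((B j).card : ℝ) := h3
      _ ≤ ∑ _j : Fin r, (c * ((t:ℝ)/n) * M / (ε * (t:ℝ)/n)^2) :=
          Finset.sum_le_sum (fun j _ => cardB j)
      _ = (r:ℝ) * (c * ((t:ℝ)/n) * M / (ε * (t:ℝ)/n)^2) := by
          rw [Finset.sum_const, Finset.card_univ, Fintype.card_fin, nsmul_eq_mul]
  -- simplify the bound
  have hsimp : (r:ℝ) * (c * ((t:ℝ)/n) * M / (ε * (t:ℝ)/n)^2) = ((r:ℝ)^2 * M / ε^2) * c := by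
    rw [← hrt]
    field_simp
  -- the final numeric bound
  have hr2 : (r:ℝ)^2 ≤ (n:ℝ)^((1:ℝ) - 2*a) := by
    have hra : (r:ℝ) ≤ (n:ℝ)^((1:ℝ)/2 - a) :=
      le_trans hrbound (Real.rpow_le_rpow_of_exponent_le hn1 (by linarith))
    have e : ((n:ℝ)^((1:ℝ)/2 - a))^2 = (n:ℝ)^((1:ℝ) - 2*a) := by
      rw [sq, ← Real.rpow_add hnpos]
      norm_num
      ring_nf
    calc (r:ℝ)^2 ≤ ((n:ℝ)^((1:ℝ)/2 - a))^2 := pow_le_pow_left₀ hrpos.le hra 2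
      _ = (n:ℝ)^((1:ℝ) - 2*a) := e
  have htail := numeric_tail a ε δ n ((r:ℝ)^2) ha0 hε hδ hδ1 hn2 hr2 (sq_nonneg _) hCn
  have hbound : (r:ℝ)^2 * M / ε^2 ≤ δ := by
    rw [div_le_iff₀ (by positivity : (0:ℝ) < ε^2), hMdef, ← mul_div_assoc,
      div_le_iff₀ hnpos]
    linarith [htail]
  -- conclude
  rw [div_le_iff₀ hcpos]
  calc ((Finset.univ.filter _).card : ℝ)
      ≤ (r:ℝ) * (c * ((t:ℝ)/n) * M / (ε * (t:ℝ)/n)^2) := hcard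
    _ = ((r:ℝ)^2 * M / ε^2) * c := hsimp
    _ ≤ δ * c := mul_le_mul_of_nonneg_right hbound hcpos.le
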